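/- arXiv:math/9910056 — 9 statements merged into one kernel-verified Lean document; each statement's English description precedes it below -/
import Mathlib

section
/- The polynomial X^n + X + 1 over the field with two elements has no repeated irreducible factors, for every integer n ≥ 2. -/
/-! In characteristic 2 the derivative of `f = X ^ n + X + 1` is `1` for even `n`, and for odd `n`
it is `X ^ (n - 1) + 1`, so that `f + X f' = 1`. Either way `f` is coprime to `f'`, i.e. separable,
hence squarefree. -/

open Polynomial

theorem separable_X_pow_add_X_add_one {R : Type*} [CommRing R] [CharP R 2] (n : ℕ) :
    (X ^ n + X + 1 : R[X]).Separable := by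
  have hderiv : derivative (X ^ n + X + 1 : R[X]) = C (n : R) * X ^ (n - 1) + 1 := by
    simp [derivative_X_pow]
  rw [Polynomial.Separable, hderiv]
  rcases Nat.even_or_odd n with ⟨k, rfl⟩ | ⟨k, rfl⟩
  · have h0 : ((k + k : ℕ) : R) = 0 := by
      rw [← two_mul, Nat.cast_mul, CharP.cast_eq_zero, zero_mul]
    rw [h0, map_zero, zero_mul, zero_add]
    exact isCoprime_one_right
  · have h1 : ((2 * k + 1 : ℕ) : R) = 1 := by
      rw [Nat.cast_add, Nat.cast_mul, CharP.cast_eq_zero, zero_mul, zero_add, Nat.cast_one]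
    have h2 : (2 : R[X]) = 0 := by exact_mod_cast CharP.cast_eq_zero R[X] 2
    refine ⟨1, X, ?_⟩
    rw [h1, map_one, one_mul, Nat.add_sub_cancel]
    linear_combination (X ^ (2 * k + 1) + X : R[X]) * h2

theorem stmt_0_general (n : ℕ) :
    Squarefree (X ^ n + X + 1 : (ZMod 2)[X]) :=
  (separable_X_pow_add_X_add_one n).squarefree

theorem stmt_0 (n : ℕ) (hn : 2 ≤ n) :
    Squarefree (X ^ n + X + 1 : (ZMod 2)[X]) :=
  stmt_0_general n
end

section
/- If n = 2^k for some integer k ≥ 1, then the multiplicative order of X in Rₙ = F₂[X]/(X^n + X + 1) is exactly n² - 1. -/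
/-!
Write `n = 2 ^ k` and `x` for the root. In characteristic 2, `x ^ n = x + 1` and Frobenius give
`x ^ (n ^ 2) = (x + 1) ^ n = x ^ n + 1 = x`, and `x` is a unit, so `x ^ (n ^ 2 - 1) = 1`. Since
`n ^ 2 - 1 = (n - 1) (n + 1)` with coprime factors, it suffices that `x ^ (n - 1)` has order `n + 1`
and `x ^ (n + 1)` has order `n - 1`. A relation `(x ^ (n - 1)) ^ b = 1` says that `x` is a root of
`(X + 1) ^ b - X ^ b`, and `(x ^ (n + 1)) ^ a = 1` that it is a root of `(X ^ 2 + X) ^ a - 1`; both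
polynomials are nonzero, so their degrees `b` and `2 a` are at least `n`. That rules out every
proper divisor of `n + 1`, resp. `n - 1`.
-/

open Polynomial AdjoinRoot

section CharTwo

variable {A : Type*} [CommRing A] [CharP A 2] {x : A} {k : ℕ}

theorem pow_two_pow_sq_eq_self (hx : x ^ 2 ^ k = x + 1) : x ^ (2 ^ k) ^ 2 = x := by
  rw [sq, pow_mul, hx, add_pow_char_pow, hx, one_pow, CharTwo.add_cancel_right]

theorem isUnit_of_pow_eq_add_one {n : ℕ} (hn : n ≠ 0) (hx : x ^ n = x + 1) : IsUnit x :=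
  IsUnit.of_mul_eq_one (x ^ (n - 1) + 1) <| by
    rw [mul_add, mul_one, mul_comm, pow_sub_one_mul hn, hx, add_right_comm,
      CharTwo.add_self_eq_zero, zero_add]

theorem pow_two_pow_sq_sub_one_eq_one (hx : x ^ 2 ^ k = x + 1) : x ^ ((2 ^ k) ^ 2 - 1) = 1 := by
  refine (isUnit_of_pow_eq_add_one (by positivity) hx).mul_right_cancel ?_
  rw [pow_sub_one_mul (by positivity), one_mul, pow_two_pow_sq_eq_self hx]

end CharTwo

theorem orderOf_eq_of_pow_eq_one_of_lt_two_mul {G : Type*} [Monoid G] {y : G} {m : ℕ}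
    (hm : m ≠ 0) (hy : y ^ m = 1) (h : ∀ b, 0 < b → y ^ b = 1 → m < 2 * b) :
    orderOf y = m :=
  have hpos : 0 < orderOf y :=
    (isOfFinOrder_iff_pow_eq_one.mpr ⟨m, Nat.pos_of_ne_zero hm, hy⟩).orderOf_pos
  (Nat.eq_of_dvd_of_lt_two_mul hm (orderOf_dvd_of_pow_eq_one hy)
    (h _ hpos (pow_orderOf_eq_one y))).symm

theorem Nat.sq_sub_one_eq_mul (n : ℕ) : n ^ 2 - 1 = (n + 1) * (n - 1) := by
  simpa using sq_sub_sq n 1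

theorem Nat.coprime_sub_one_add_one_of_even {n : ℕ} (hn : Even n) : Coprime (n - 1) (n + 1) := by
  rcases n.eq_zero_or_pos with rfl | hpos
  · simp
  rw [show n + 1 = 2 + (n - 1) by omega, coprime_add_self_right, coprime_two_right]
  exact Nat.Even.sub_odd hpos hn odd_one

theorem natDegree_X_pow_add_X_add_one {R : Type*} [Semiring R] [Nontrivial R] {n : ℕ}
    (hn : 2 ≤ n) : (X ^ n + X + 1 : R[X]).natDegree = n := by
  compute_degree!
  · simp [show 1 ≠ n by omega, show n ≠ 0 by omega]
  · omega

theorem AdjoinRoot.natDegree_le_of_mk_eq_zero {K : Type*} [Field K] {f g : K[X]} (hg : g ≠ 0)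
    (h : mk f g = 0) : f.natDegree ≤ g.natDegree :=
  natDegree_le_of_dvd (mk_eq_zero.mp h) hg

theorem AdjoinRoot.charP {K : Type*} [Field K] {f : K[X]} (hf : f.degree ≠ 0) (p : ℕ)
    [CharP K p] : CharP (AdjoinRoot f) p :=
  charP_of_injective_algebraMap (of.injective_of_degree_ne_zero hf) p

section XPowAddXAddOne

variable {K : Type*} [Field K] [CharP K 2] {n : ℕ}

local notation "𝔣" => (X ^ n + X + 1 : K[X])
local notation "𝔵" => root 𝔣

theorem root_X_pow_add_X_add_one_pow : 𝔵 ^ n = 𝔵 + 1 := by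
  rw [← mk_X, ← map_pow, ← map_one (mk _), ← map_add, mk_eq_mk, CharTwo.sub_eq_add,
    add_assoc]

theorem le_of_root_pow_sub_one_pow_eq_one (hn : 2 ≤ n) {b : ℕ} (hb : 0 < b)
    (h : (𝔵 ^ (n - 1)) ^ b = 1) : n ≤ b := by
  have hg : ((X + 1) ^ b - X ^ b : K[X]) ≠ 0 := fun h0 => by
    simpa [hb.ne'] using congr_arg (eval 0) h0
  have hx : 𝔵 ^ (n - 1) * 𝔵 = 𝔵 + 1 := by
    rw [pow_sub_one_mul (by omega), root_X_pow_add_X_add_one_pow]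
  have hroot : mk 𝔣 ((X + 1) ^ b - X ^ b) = 0 := by
    rw [map_sub, map_pow, map_pow, map_add, mk_X, map_one, ← hx, mul_pow, h, one_mul, sub_self]
  calc n = natDegree 𝔣 := (natDegree_X_pow_add_X_add_one hn).symm
    _ ≤ natDegree ((X + 1) ^ b - X ^ b : K[X]) := natDegree_le_of_mk_eq_zero hg hroot
    _ ≤ b := by compute_degree

theorem le_two_mul_of_root_pow_add_one_pow_eq_one (hn : 2 ≤ n) {a : ℕ} (ha : 0 < a)
    (h : (𝔵 ^ (n + 1)) ^ a = 1) : n ≤ 2 * a := by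
  have hg : ((X ^ 2 + X) ^ a - 1 : K[X]) ≠ 0 := fun h0 => by
    simpa [ha.ne'] using congr_arg (eval 0) h0
  have hx : 𝔵 ^ (n + 1) = 𝔵 ^ 2 + 𝔵 := by
    rw [pow_succ, root_X_pow_add_X_add_one_pow]
    ring
  have hroot : mk 𝔣 ((X ^ 2 + X) ^ a - 1) = 0 := by
    rw [map_sub, map_pow, map_add, map_pow, mk_X, map_one, ← hx, h, sub_self]
  calc n = natDegree 𝔣 := (natDegree_X_pow_add_X_add_one hn).symm
    _ ≤ natDegree ((X ^ 2 + X) ^ a - 1 : K[X]) := natDegree_le_of_mk_eq_zero hg hroot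
    _ ≤ a * 2 := by compute_degree
    _ = 2 * a := mul_comm a 2

theorem orderOf_root_pow_sub_one (hn : 2 ≤ n) (h1 : 𝔵 ^ (n ^ 2 - 1) = 1) :
    orderOf (𝔵 ^ (n - 1)) = n + 1 := by
  refine orderOf_eq_of_pow_eq_one_of_lt_two_mul n.succ_ne_zero ?_ fun b hb hpow => ?_
  · rwa [← pow_mul, mul_comm, ← Nat.sq_sub_one_eq_mul]
  · have := le_of_root_pow_sub_one_pow_eq_one hn hb hpow
    omega

theorem orderOf_root_pow_add_one (hn : 2 ≤ n) (h1 : 𝔵 ^ (n ^ 2 - 1) = 1) :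
    orderOf (𝔵 ^ (n + 1)) = n - 1 := by
  refine orderOf_eq_of_pow_eq_one_of_lt_two_mul (by omega) ?_ fun a ha hpow => ?_
  · rwa [← pow_mul, ← Nat.sq_sub_one_eq_mul]
  · have := le_two_mul_of_root_pow_add_one_pow_eq_one hn ha hpow
    omega

end XPowAddXAddOne

theorem orderOf_root_X_two_pow_add_X_add_one {K : Type*} [Field K] [CharP K 2] {k : ℕ}
    (hk : k ≠ 0) : orderOf (root (X ^ 2 ^ k + X + 1 : K[X])) = (2 ^ k) ^ 2 - 1 := by
  have hn : 2 ≤ 2 ^ k := Nat.le_self_pow hk 2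
  have hdeg := natDegree_X_pow_add_X_add_one (R := K) hn
  have : CharP (AdjoinRoot (X ^ 2 ^ k + X + 1 : K[X])) 2 :=
    AdjoinRoot.charP (natDegree_pos_iff_degree_pos.mp (by omega)).ne' 2
  have h1 := pow_two_pow_sq_sub_one_eq_one (root_X_pow_add_X_add_one_pow (K := K) (n := 2 ^ k))
  refine Nat.dvd_antisymm (orderOf_dvd_of_pow_eq_one h1) ?_
  rw [Nat.sq_sub_one_eq_mul]
  refine (Nat.coprime_sub_one_add_one_of_even ?_).symm.mul_dvd_of_dvd_of_dvd ?_ ?_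
  · exact (Nat.even_pow' hk).mpr even_two
  · exact orderOf_root_pow_sub_one hn h1 ▸ orderOf_pow_dvd _
  · exact orderOf_root_pow_add_one hn h1 ▸ orderOf_pow_dvd _

theorem stmt_5 (n k : ℕ) (hk : 1 ≤ k) (hn : n = 2 ^ k) :
    orderOf (AdjoinRoot.root (X ^ n + X + 1 : (ZMod 2)[X])) = n ^ 2 - 1 := by
  subst hn
  exact orderOf_root_X_two_pow_add_X_add_one (by omega)
end

section
/- If n = 2^k + 1 for some integer k ≥ 1, then X^{n² - n + 1} = 1 in Rₙ = F₂[X]/(X^n + X + 1). -/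
/-!
Let `r` be the class of `X`, so `r ^ n = r + 1`, and write `n = m + 1` with `m = 2 ^ k`. By the
Frobenius, `r ^ (n ^ 2) = (r + 1) ^ n = (r ^ m + 1) (r + 1) = r ^ n + r ^ m + r + 1 = r ^ m`.
Also `r (r ^ m + 1) = 1`, so `r` is a unit and cancelling `r ^ m` from
`r ^ m * r ^ (n ^ 2 - n + 1) = r ^ (n ^ 2)` gives the claim.
-/

open Polynomial

section CharTwo

variable {R : Type*} [CommRing R] [CharP R 2] {r : R}

theorem isUnit_of_pow_succ_eq_add_one {m : ℕ} (hr : r ^ (m + 1) = r + 1) : IsUnit r :=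
  IsUnit.of_mul_eq_one (r ^ m + 1) <| by
    linear_combination hr + r * CharTwo.two_eq_zero (R := R)

theorem pow_sq_eq_pow_two_pow_of_pow_eq_add_one {k : ℕ} (hr : r ^ (2 ^ k + 1) = r + 1) :
    r ^ (2 ^ k + 1) ^ 2 = r ^ 2 ^ k :=
  calc r ^ (2 ^ k + 1) ^ 2 = (r + 1) ^ 2 ^ k * (r + 1) := by rw [sq, pow_mul, hr, pow_succ]
    _ = (r ^ 2 ^ k + 1) * (r + 1) := by rw [add_pow_char_pow, one_pow]
    _ = r ^ 2 ^ k := by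
      linear_combination hr + (r + 1) * CharTwo.two_eq_zero (R := R)

theorem pow_sq_sub_add_one_eq_one_of_pow_eq_add_one {n k : ℕ} (hn : n = 2 ^ k + 1)
    (hr : r ^ n = r + 1) : r ^ (n ^ 2 - n + 1) = 1 := by
  subst hn
  have hsplit : (2 ^ k + 1) ^ 2 = 2 ^ k + ((2 ^ k + 1) ^ 2 - (2 ^ k + 1) + 1) := by
    have : 2 ^ k + 1 ≤ (2 ^ k + 1) ^ 2 := Nat.le_self_pow two_ne_zero _
    omega
  have h := pow_sq_eq_pow_two_pow_of_pow_eq_add_one hr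
  rwa [hsplit, pow_add, ((isUnit_of_pow_succ_eq_add_one hr).pow _).mul_eq_left] at h

end CharTwo

theorem stmt_6_general (n k : ℕ) (hn : n = 2 ^ k + 1) :
    (AdjoinRoot.root (X ^ n + X + 1 : (ZMod 2)[X])) ^ (n ^ 2 - n + 1) = 1 := by
  set f : (ZMod 2)[X] := X ^ n + X + 1 with hf
  have hn2 : 2 ≤ n := hn ▸ Nat.add_le_add_right Nat.one_le_two_pow 1
  have hdeg : f.natDegree = n := by
    rw [hf]; compute_degree!
    · rw [if_neg (by omega), if_neg (by omega)]; decide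
    · omega
  have : CharP (AdjoinRoot f) 2 :=
    charP_of_injective_algebraMap (AdjoinRoot.of.injective_of_degree_ne_zero
      (natDegree_pos_iff_degree_pos.mp (by omega)).ne') 2
  refine pow_sq_sub_add_one_eq_one_of_pow_eq_add_one hn ?_
  have hroot : AdjoinRoot.mk f f = 0 := AdjoinRoot.mk_self
  rw [hf, map_add, map_add, map_pow, map_one, AdjoinRoot.mk_X] at hroot
  linear_combination hroot - (AdjoinRoot.root f + 1) * CharTwo.two_eq_zero (R := AdjoinRoot f)

theorem stmt_6 (n k : ℕ) (hk : 1 ≤ k) (hn : n = 2 ^ k + 1) :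
    (AdjoinRoot.root (X ^ n + X + 1 : (ZMod 2)[X])) ^ (n ^ 2 - n + 1) = 1 :=
  stmt_6_general n k hn
end

section
/- If n = 2^k + 1 for some integer k ≥ 1, then the multiplicative order of X in Rₙ = F₂[X]/(X^n + X + 1) is exactly n² - n + 1. -/
/-!
Write `Q = 2 ^ k` and `x` for the class of `X`. Since `y ↦ y ^ Q` is additive,
`x ^ ((Q + 1) ^ 2) = (x + 1) ^ (Q + 1) = (x ^ Q + 1) (x + 1) = x ^ Q`, so the order `t` of `x`
divides `N = Q ^ 2 + Q + 1`.

Conversely, work in `F = 𝔽_{Q³}`. If `δ ≠ 0` has trace zero over `𝔽_Q`, then `δ ^ (Q - 1)` is a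
root of `X ^ (Q + 1) + X + 1`, hence `δ ^ ((Q - 1) t) = 1`. The trace kernel `V` has index at
most `Q`, so `V` and `z⁻¹ V` meet nontrivially for every `z`: each `z ≠ 0` is a quotient of two
nonzero elements of `V`. Therefore `z ^ ((Q - 1) t) = 1` on all of `Fˣ`, and
`Q ^ 3 - 1 = (Q - 1) N` divides `(Q - 1) t`.
-/

open Polynomial

theorem one_lt_pow_of_card_eq {α : Type*} [Finite α] [Nontrivial α] {p k : ℕ}
    (h : Nat.card α = p ^ (3 * k)) : 1 < p ^ k := by
  have h1 := Finite.one_lt_card (α := α)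
  rw [h, pow_mul'] at h1
  exact (Nat.one_lt_pow_iff (by norm_num)).mp h1

section FrobeniusTrace

variable (F : Type*) [Field F] (p k : ℕ) [ExpChar F p]

/-- For `Nat.card F = p ^ (3 * k)` this is the trace of `F` over its subfield with `p ^ k`
elements. -/
noncomputable def frobeniusTrace : F →+ F :=
  let σ := (iterateFrobenius F p k).toAddMonoidHom
  σ.comp σ + σ + AddMonoidHom.id F

variable {F p k}

theorem frobeniusTrace_apply (x : F) :
    frobeniusTrace F p k x = (x ^ p ^ k) ^ p ^ k + x ^ p ^ k + x := by
  simp [frobeniusTrace, iterateFrobenius_def]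

variable [Finite F]

theorem frobeniusTrace_pow (hF : Nat.card F = p ^ (3 * k)) (x : F) :
    frobeniusTrace F p k x ^ p ^ k = frobeniusTrace F p k x := by
  have := Fintype.ofFinite F
  have hx : ((x ^ p ^ k) ^ p ^ k) ^ p ^ k = x := by
    rw [← pow_mul, ← pow_mul, show p ^ k * (p ^ k * p ^ k) = Fintype.card F by
      rw [← Nat.card_eq_fintype_card, hF]; ring, FiniteField.pow_card]
  rw [frobeniusTrace_apply, add_pow_expChar_pow, add_pow_expChar_pow, hx]
  ring

theorem index_ker_frobeniusTrace_le (hF : Nat.card F = p ^ (3 * k)) :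
    (frobeniusTrace F p k).ker.index ≤ p ^ k := by
  have hQ := one_lt_pow_of_card_eq hF
  rw [AddSubgroup.index_ker]
  calc Nat.card (frobeniusTrace F p k).range ≤ Nat.card ((X ^ p ^ k - X : F[X]).rootSet F) := by
        refine Nat.card_mono (Set.toFinite _) ?_
        rintro _ ⟨x, rfl⟩
        simp [mem_rootSet, FiniteField.X_pow_card_sub_X_ne_zero F hQ,
          frobeniusTrace_pow hF]
    _ ≤ p ^ k := by
        rw [Nat.card_coe_set_eq]
        exact (ncard_rootSet_le _ F).trans_eq (FiniteField.X_pow_card_sub_X_natDegree_eq F hQ)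

theorem exists_ne_zero_frobeniusTrace_eq_zero_and_mul (hF : Nat.card F = p ^ (3 * k)) (z : F) :
    ∃ δ ≠ 0, frobeniusTrace F p k δ = 0 ∧ frobeniusTrace F p k (z * δ) = 0 := by
  have hQ := one_lt_pow_of_card_eq hF
  set V := (frobeniusTrace F p k).ker
  set U := V.comap (AddMonoidHom.mulLeft z)
  have hV : V.index ≤ p ^ k := index_ker_frobeniusTrace_le hF
  have hU : U.index ≤ p ^ k := by
    have hV0 : V.relIndex ⊤ ≠ 0 := by
      simpa using AddSubgroup.index_ne_zero_of_finite
    rw [AddSubgroup.index_comap]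
    exact (AddSubgroup.relIndex_le_of_le_right le_top hV0).trans (by simpa using hV)
  have hcard : p ^ k ≤ Nat.card ↥(V ⊓ U) := by
    have key : p ^ k * (p ^ k) ^ 2 ≤ Nat.card ↥(V ⊓ U) * (p ^ k) ^ 2 := calc
      p ^ k * (p ^ k) ^ 2 = Nat.card ↥(V ⊓ U) * (V ⊓ U).index := by
          rw [AddSubgroup.card_mul_index, hF]; ring
      _ ≤ Nat.card ↥(V ⊓ U) * (p ^ k) ^ 2 := by
          gcongr
          exact AddSubgroup.index_inf_le.trans (by nlinarith)
    exact Nat.le_of_mul_le_mul_right key (by positivity)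
  obtain ⟨⟨δ, hδ⟩, hδ0⟩ := (AddSubgroup.ne_bot_iff_exists_ne_zero (H := V ⊓ U)).mp
    ((AddSubgroup.one_lt_card_iff_ne_bot _).mp (hQ.trans_le hcard))
  exact ⟨δ, fun h => hδ0 (Subtype.ext h), hδ.1, hδ.2⟩

theorem card_sub_one_dvd_of_forall_frobeniusTrace_eq_zero (hF : Nat.card F = p ^ (3 * k)) {e : ℕ}
    (he : ∀ δ : F, δ ≠ 0 → frobeniusTrace F p k δ = 0 → δ ^ e = 1) : Nat.card F - 1 ∣ e := by
  have hall : ∀ z : Fˣ, z ^ e = 1 := by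
    intro z
    obtain ⟨δ, hδ0, hδ, hzδ⟩ := exists_ne_zero_frobeniusTrace_eq_zero_and_mul hF (z : F)
    have h := he _ (mul_ne_zero z.ne_zero hδ0) hzδ
    rw [mul_pow, he δ hδ0 hδ, mul_one] at h
    exact Units.ext h
  rw [← Nat.card_units, ← IsCyclic.exponent_eq_card]
  exact Monoid.exponent_dvd_of_forall_pow_eq_one hall

end FrobeniusTrace

theorem pow_eq_one_of_pow_add_add_one_eq_zero {R : Type*} [CommRing R] {p : ℕ} [ExpChar R p]
    (k : ℕ) {x : R} (hx : x ^ (p ^ k + 1) + x + 1 = 0) : x ^ ((p ^ k) ^ 2 + p ^ k + 1) = 1 := by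
  set Q := p ^ k
  have hunit : x * -(x ^ Q + 1) = 1 := by linear_combination -hx + (pow_succ x Q)
  have hsq : x ^ ((Q + 1) ^ 2) = x ^ Q := by
    have h1 : x ^ (Q + 1) = -(x + 1) := by linear_combination hx
    have h2 : (-(x + 1)) ^ Q = -(x ^ Q + 1) := by
      simp [Q, ← iterateFrobenius_def (p := p), map_neg, map_add]
    rw [sq, pow_mul, h1, pow_succ, h2]
    linear_combination hx - pow_succ x Q
  refine (IsUnit.of_mul_eq_one _ hunit).pow Q |>.mul_left_cancel ?_
  rw [← pow_add, mul_one, ← hsq]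
  ring_nf

theorem pow_sub_one_pow_add_add_one_eq_zero {K : Type*} [Field K] {Q : ℕ} (hQ : 0 < Q) {δ : K}
    (hδ : δ ≠ 0) (h : (δ ^ Q) ^ Q + δ ^ Q + δ = 0) :
    (δ ^ (Q - 1)) ^ (Q + 1) + δ ^ (Q - 1) + 1 = 0 := by
  obtain ⟨m, rfl⟩ : ∃ m, Q = m + 1 := ⟨Q - 1, by omega⟩
  rw [Nat.add_sub_cancel]
  refine (mul_eq_zero.mp ?_).resolve_right hδ
  rw [← h]
  ring

theorem orderOf_dvd_orderOf_root {R S : Type*} [CommRing R] [CommRing S] {f : R[X]} {i : R →+* S}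
    {α : S} (hα : f.eval₂ i α = 0) : orderOf α ∣ orderOf (AdjoinRoot.root f) := by
  simpa using orderOf_map_dvd (AdjoinRoot.lift i α hα).toMonoidHom (AdjoinRoot.root f)

theorem stmt_7 (n k : ℕ) (hk : 1 ≤ k) (hn : n = 2 ^ k + 1) :
    orderOf (AdjoinRoot.root (X ^ n + X + 1 : (ZMod 2)[X])) = n ^ 2 - n + 1 := by
  subst hn
  set Q := 2 ^ k with hQ
  set f : (ZMod 2)[X] := X ^ (Q + 1) + X + 1
  have hQ2 : 2 ≤ Q := le_self_pow₀ (by norm_num) (by omega)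
  rw [show (Q + 1) ^ 2 - (Q + 1) + 1 = Q ^ 2 + Q + 1 by
    rw [show (Q + 1) ^ 2 = Q ^ 2 + Q + (Q + 1) by ring]; omega]
  refine Nat.dvd_antisymm (orderOf_dvd_of_pow_eq_one ?_) ?_
  · have hf : f.natDegree = Q + 1 := by
      unfold f; compute_degree!; simp [show Q ≠ 0 by omega]
    have : Nontrivial (AdjoinRoot f) :=
      AdjoinRoot.nontrivial f (degree_ne_of_natDegree_ne (hf ▸ Q.succ_ne_zero))
    have : CharP (AdjoinRoot f) 2 :=
      charP_of_injective_algebraMap (algebraMap (ZMod 2) _).injective 2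
    refine pow_eq_one_of_pow_add_add_one_eq_zero k ?_
    simpa [f] using AdjoinRoot.eval₂_root f
  · let F := GaloisField 2 (3 * k)
    have hF : Nat.card F = 2 ^ (3 * k) := GaloisField.card 2 _ (by omega)
    have key := card_sub_one_dvd_of_forall_frobeniusTrace_eq_zero hF
      (e := (Q - 1) * orderOf (AdjoinRoot.root f)) fun δ hδ0 hδ => by
        rw [frobeniusTrace_apply] at hδ
        have hroot := pow_sub_one_pow_add_add_one_eq_zero (by omega) hδ0 hδ
        rw [pow_mul, ← orderOf_dvd_iff_pow_eq_one]
        exact orderOf_dvd_orderOf_root (i := algebraMap (ZMod 2) F) (by simpa [f] using hroot)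
    have hcube : 2 ^ (3 * k) - 1 = (Q - 1) * (Q ^ 2 + Q + 1) := by
      obtain ⟨m, hm⟩ : ∃ m, Q = m + 1 := ⟨Q - 1, by omega⟩
      rw [mul_comm, pow_mul, ← hQ, hm, Nat.add_sub_cancel]
      exact Nat.sub_eq_of_eq_add (by ring)
    rw [hF, hcube] at key
    exact Nat.dvd_of_mul_dvd_mul_left (by omega) key
end

section
/- For all n ≥ 2, t(2^n − 1) divides 2^{t(n)} − 1, where t(m) denotes the multiplicative order of X in F₂[X]/(X^m + X + 1). -/
/-!
Let `r` be the class of `X` in `R_m`, `m = 2 ^ n - 1`. Then `r ^ 2 ^ n = r ^ 2 + r`, i.e. the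
`F₂`-linear Frobenius `φ` satisfies `(φ ^ n + φ + 1) r = 0`. Since `X ^ n + X + 1` divides
`X ^ t(n) - 1`, also `φ ^ t(n) r = r`, that is `r ^ 2 ^ t(n) = r`; as `r` is a unit,
`r ^ (2 ^ t(n) - 1) = 1`.
-/

open Polynomial FiniteField

/-- `t m` is the multiplicative order of `X` in `F₂[X]/(X^m + X + 1)`. -/
noncomputable def t (m : ℕ) : ℕ :=
  orderOf (AdjoinRoot.root (X ^ m + X + 1 : (ZMod 2)[X]))

theorem orderOf_dvd_sub_one_of_pow_eq_self {M : Type*} [Monoid M] {x : M} (hx : IsUnit x)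
    {N : ℕ} (hN : x ^ N = x) : orderOf x ∣ N - 1 := by
  apply orderOf_dvd_of_pow_eq_one
  rcases N with _ | N
  · rw [Nat.zero_sub, pow_zero]
  · exact hx.mul_eq_right.mp (by rwa [← pow_succ])

theorem AdjoinRoot.dvd_X_pow_orderOf_root_sub_one {R : Type*} [CommRing R] (f : R[X]) :
    f ∣ X ^ orderOf (root f) - 1 := by
  rw [← mk_eq_zero, map_sub, map_pow, mk_X, map_one, sub_eq_zero]
  exact pow_orderOf_eq_one _

theorem Module.End.pow_apply_eq_self_of_aeval_eq_zero {K M : Type*} [CommRing K]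
    [AddCommGroup M] [Module K M] {f : Module.End K M} {p : K[X]} {v : M}
    (hv : aeval f p v = 0) {k : ℕ} (hk : p ∣ X ^ k - 1) : (f ^ k) v = v := by
  obtain ⟨c, hc⟩ := hk
  have : aeval f (X ^ k - 1 : K[X]) v = 0 := by
    rw [hc, mul_comm, map_mul, Module.End.mul_apply, hv, map_zero]
  simpa [sub_eq_zero] using this

section Frobenius

variable (K : Type*) {R : Type*} [Field K] [Fintype K] [CommRing R] [Algebra K R]

theorem frobeniusAlgHom_toLinearMap_pow_apply (k : ℕ) (x : R) :
    ((frobeniusAlgHom K R).toLinearMap ^ k) x = x ^ Fintype.card K ^ k := by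
  rw [← AlgHom.toEnd_apply, ← map_pow, AlgHom.toEnd_apply, AlgHom.toLinearMap_apply,
    AlgHom.coe_pow, coe_frobeniusAlgHom, pow_iterate]

theorem pow_card_pow_eq_self_of_aeval_frobenius {p : K[X]} {r : R}
    (hr : aeval (frobeniusAlgHom K R).toLinearMap p r = 0) {k : ℕ} (hk : p ∣ X ^ k - 1) :
    r ^ Fintype.card K ^ k = r := by
  rw [← frobeniusAlgHom_toLinearMap_pow_apply]
  exact Module.End.pow_apply_eq_self_of_aeval_eq_zero hr hk

end Frobenius

section Trinomial

variable {R : Type*} [CommRing R] {n : ℕ} {r : R}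

theorem isUnit_of_pow_add_add_one_eq_zero (hn : 1 ≤ n) (hr : r ^ n + r + 1 = 0) : IsUnit r := by
  refine IsUnit.of_mul_eq_one (-(r ^ (n - 1) + 1)) ?_
  rw [← sub_eq_zero, ← neg_eq_zero, ← hr]
  conv_rhs => rw [← Nat.sub_add_cancel hn]
  ring

theorem aeval_frobeniusAlgHom_trinomial [Algebra (ZMod 2) R]
    (hr : r ^ (2 ^ n - 1) + r + 1 = 0) :
    aeval (frobeniusAlgHom (ZMod 2) R).toLinearMap (X ^ n + X + 1 : (ZMod 2)[X]) r = 0 := by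
  have hr' : r ^ 2 ^ n + r ^ 2 + r = r * (r ^ (2 ^ n - 1) + r + 1) := by
    conv_lhs => rw [← Nat.sub_add_cancel (Nat.one_le_two_pow : 1 ≤ 2 ^ n)]
    ring
  simp only [map_add, map_pow, aeval_X, map_one, LinearMap.add_apply, Module.End.one_apply,
    frobeniusAlgHom_toLinearMap_pow_apply, AlgHom.toLinearMap_apply, coe_frobeniusAlgHom,
    ZMod.card]
  rw [hr', hr, mul_zero]

end Trinomial

theorem stmt_8 (n : ℕ) (hn : 2 ≤ n) : t (2 ^ n - 1) ∣ 2 ^ t n - 1 := by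
  set r := AdjoinRoot.root (X ^ (2 ^ n - 1) + X + 1 : (ZMod 2)[X])
  have hr : r ^ (2 ^ n - 1) + r + 1 = 0 := by
    have h := AdjoinRoot.eval₂_root (X ^ (2 ^ n - 1) + X + 1 : (ZMod 2)[X])
    simp only [eval₂_add, eval₂_pow, eval₂_X, eval₂_one] at h
    exact h
  have hm : 1 ≤ 2 ^ n - 1 := Nat.le_sub_one_of_lt (Nat.one_lt_two_pow (by omega))
  refine orderOf_dvd_sub_one_of_pow_eq_self (isUnit_of_pow_add_add_one_eq_zero hm hr) ?_
  simpa only [ZMod.card, t] using pow_card_pow_eq_self_of_aeval_frobenius (ZMod 2)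
    (aeval_frobeniusAlgHom_trinomial hr) (AdjoinRoot.dvd_X_pow_orderOf_root_sub_one _)
end

section
/- For n = 2^k with k ≥ 1, every irreducible factor of X^n + X + 1 over F₂ has degree dividing 2k. -/
/-!
Let `q = #K` and `p = char K`. In `A = K[X]/(X^(q^k) - X - 1)` the `K`-algebra endomorphism
`φ = x ↦ x^(q^k)` moves the class `α` of `X` to `α + 1`, so `φ^[p] α = α + p = α`, i.e.
`α^(q^(kp)) = α`. Hence every irreducible factor of `X^(q^k) - X - 1` divides `X^(q^(kp)) - X`,
and so has degree dividing `kp`. For `K = 𝔽₂` and `q^k = 2^k = n` this is the theorem.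
-/

open Polynomial

theorem iterate_map_eq_add_natCast_of_map_eq_add_one {R F : Type*} [Semiring R] [FunLike F R R]
    [RingHomClass F R R] (φ : F) {a : R} (h : φ a = a + 1) (m : ℕ) :
    φ^[m] a = a + m := by
  induction m with
  | zero => simp
  | succ m ih =>
    rw [Function.iterate_succ_apply', ih, map_add, map_natCast, h, add_assoc, add_comm 1,
      Nat.cast_succ]

theorem X_pow_card_pow_sub_X_sub_one_dvd (K : Type*) [Field K] [Fintype K] (k : ℕ) :
    (X ^ Fintype.card K ^ k - X - 1 : K[X]) ∣ X ^ Fintype.card K ^ (k * ringChar K) - X := by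
  let f : K[X] := X ^ Fintype.card K ^ k - X - 1
  let α := AdjoinRoot.root f
  let φ := FiniteField.frobeniusAlgHom K (AdjoinRoot f) ^ k
  have hφ : ⇑φ = fun x ↦ x ^ Fintype.card K ^ k := by
    simp only [φ, AlgHom.coe_pow, FiniteField.coe_frobeniusAlgHom, pow_iterate]
  have hα : φ α = α + 1 := by
    have hf : AdjoinRoot.mk f f = 0 := AdjoinRoot.mk_self
    rw [map_sub, map_sub, map_pow, AdjoinRoot.mk_X, map_one, sub_sub, sub_eq_zero] at hf
    rw [hφ]
    exact hf
  have hchar : ((ringChar K : ℕ) : AdjoinRoot f) = 0 := by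
    rw [← map_natCast (algebraMap K (AdjoinRoot f)), ringChar.Nat.cast_ringChar, map_zero]
  have hfix : α ^ Fintype.card K ^ (k * ringChar K) = α := by
    have := iterate_map_eq_add_natCast_of_map_eq_add_one φ hα (ringChar K)
    rwa [hchar, add_zero, hφ, pow_iterate, ← pow_mul] at this
  rw [← AdjoinRoot.mk_eq_zero, map_sub, map_pow, AdjoinRoot.mk_X, hfix, sub_self]

theorem Irreducible.natDegree_dvd_of_dvd_X_pow_card_pow_sub_X_sub_one {K : Type*} [Field K]
    [Fintype K] {g : K[X]} (hg : Irreducible g) {k : ℕ}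
    (hdvd : g ∣ X ^ Fintype.card K ^ k - X - 1) :
    g.natDegree ∣ k * ringChar K := by
  apply hg.natDegree_dvd_of_dvd_X_pow_card_pow_sub_X
  rw [Nat.card_eq_fintype_card]
  exact hdvd.trans (X_pow_card_pow_sub_X_sub_one_dvd K k)

theorem stmt_13_general (n k : ℕ) (hn : n = 2 ^ k)
    (g : (ZMod 2)[X]) (hirr : Irreducible g) (hdvd : g ∣ X ^ n + X + 1) :
    g.natDegree ∣ 2 * k := by
  have hpoly : (X ^ n + X + 1 : (ZMod 2)[X]) = X ^ Fintype.card (ZMod 2) ^ k - X - 1 := by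
    rw [ZMod.card, hn, CharTwo.sub_eq_add, CharTwo.sub_eq_add]
  rw [hpoly] at hdvd
  simpa only [ZMod.ringChar_zmod_n, mul_comm k] using
    hirr.natDegree_dvd_of_dvd_X_pow_card_pow_sub_X_sub_one hdvd

theorem stmt_13 (n k : ℕ) (hk : 1 ≤ k) (hn : n = 2 ^ k)
    (g : (ZMod 2)[X]) (hirr : Irreducible g) (hdvd : g ∣ X ^ n + X + 1) :
    g.natDegree ∣ 2 * k :=
  stmt_13_general n k hn g hirr hdvd
end

section
/- For n = 2^k + 1 with k ≥ 1, every irreducible factor of X^n + X + 1 over F₂ has degree dividing 3k. -/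
open Polynomial

/-! A root `α` of `X ^ (2 ^ k + 1) + X + 1` in characteristic two satisfies
`α ^ 2 ^ k = (α + 1) / α`. The Möbius map `z ↦ (z + 1) / z` has order three, so the `k`-th power
of Frobenius fixes `α` after three iterations: `α ^ 2 ^ (3 * k) = α`. Hence every irreducible
factor over `𝔽₂` divides `X ^ 2 ^ (3 * k) - X`, and its degree divides `3 * k`. -/

theorem iterate_three_eq_self_of_mul_eq_add_one {R : Type*} [CommRing R] [CharP R 2]
    (φ : R →+* R) {a : R} (h : φ a * a = a + 1) : φ (φ (φ a)) = a := by
  set b := φ a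
  set c := φ b
  have hc : c * b = b + 1 := by simpa using congrArg φ h
  have hd : φ c * c = c + 1 := by simpa using congrArg φ hc
  have two : (2 : R) = 0 := CharTwo.two_eq_zero
  -- `φ² a = 1 / (a + 1)`, whence `φ³ a = (φ² a + 1) / φ² a = a`
  have hca : c * (a + 1) = 1 := by
    linear_combination a * hc + (c + 1) * h + (c * a + c + a - a * c * b) * two
  linear_combination (a + 1) * hd + (φ c - 1) * hca +
    (φ c - φ c * c * a - φ c * c + c * a + c) * two

theorem pow_two_pow_three_mul_eq_self {R : Type*} [CommRing R] [CharP R 2] {a : R} (k : ℕ)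
    (h : a ^ (2 ^ k + 1) = a + 1) : a ^ 2 ^ (3 * k) = a := by
  have := iterate_three_eq_self_of_mul_eq_add_one (iterateFrobenius R 2 k)
    (by rwa [iterateFrobenius_def, ← pow_succ])
  simpa only [iterateFrobenius_def, ← pow_mul, ← pow_add, show k + k + k = 3 * k by ring] using this

theorem dvd_X_pow_two_pow_three_mul_sub_X {F : Type*} [Field F] [CharP F 2] {g : F[X]}
    (hg : Irreducible g) {k : ℕ} (h : g ∣ X ^ (2 ^ k + 1) + X + 1) :
    g ∣ X ^ 2 ^ (3 * k) - X := by
  have : Fact (Irreducible g) := ⟨hg⟩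
  have : CharP (AdjoinRoot g) 2 :=
    charP_of_injective_algebraMap (algebraMap F (AdjoinRoot g)).injective 2
  have hroot : AdjoinRoot.root g ^ (2 ^ k + 1) = AdjoinRoot.root g + 1 := by
    have := AdjoinRoot.mk_eq_zero.mpr h
    simp only [map_add, map_pow, map_one, AdjoinRoot.mk_X] at this
    exact CharTwo.add_eq_zero.mp (by simpa only [add_assoc] using this)
  rw [← AdjoinRoot.mk_eq_zero, map_sub, map_pow, AdjoinRoot.mk_X,
    pow_two_pow_three_mul_eq_self k hroot, sub_self]

theorem stmt_14_general (n k : ℕ) (hn : n = 2 ^ k + 1)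
    (g : (ZMod 2)[X]) (hirr : Irreducible g) (hdvd : g ∣ X ^ n + X + 1) :
    g.natDegree ∣ 3 * k := by
  subst hn
  apply hirr.natDegree_dvd_of_dvd_X_pow_card_pow_sub_X
  rw [Nat.card_zmod]
  exact dvd_X_pow_two_pow_three_mul_sub_X hirr hdvd

theorem stmt_14 (n k : ℕ) (hk : 1 ≤ k) (hn : n = 2 ^ k + 1)
    (g : (ZMod 2)[X]) (hirr : Irreducible g) (hdvd : g ∣ X ^ n + X + 1) :
    g.natDegree ∣ 3 * k :=
  stmt_14_general n k hn g hirr hdvd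
end

section
/- Let f, g ∈ F₂[X] be coprime polynomials with hat-polynomials f̂ = Σ aᵢ X^{2^i}, ĝ similarly (where f = Σ aᵢ X^i). Then F₂[X]/(f̂ ∘ ĝ) is isomorphic as an F₂-algebra to F₂[Y,Z]/(f̂(Y), ĝ(Z)). -/
open Polynomial

/-!
Since `(p q)^ = p̂ ∘ q̂` and `X` divides every `p̂`, `q̂` divides `(p q)^`. As `x ↦ p̂(x)` is additive
in characteristic `2`, `(f g)^(b̂(Y) + â(Z)) = (g b f)^(Y) + (f a g)^(Z)` lies in `(f̂(Y), ĝ(Z))`,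
so `X ↦ b̂(Y) + â(Z)` is well defined; so is `Y ↦ ĝ(X)`, `Z ↦ f̂(X)`, as `f̂(ĝ(X))` and
`ĝ(f̂(X)) = (g f)^(X)` vanish modulo `f̂ ∘ ĝ`. The Bézout relation `a f + b g = 1` makes the two
substitutions mutually inverse: `X ↦ (b g + a f)^(X) = X`, and `Y ↦ (g b)^(Y) + (g a)^(Z) ≡ Y`
because `(g b)^ = X - (a f)^`; symmetrically for `Z`.
-/

/-- The hat-polynomial (linearized polynomial) of `f = Σ aᵢ Xⁱ` is `f̂ = Σ aᵢ X^(2^i)`. -/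
noncomputable def hat (f : (ZMod 2)[X]) : (ZMod 2)[X] :=
  f.sum fun i a => C a * X ^ 2 ^ i

lemma hat_monomial (n : ℕ) (a : ZMod 2) : hat (monomial n a) = C a * X ^ 2 ^ n := by
  simp [hat, sum_monomial_index]

lemma hat_add (p q : (ZMod 2)[X]) : hat (p + q) = hat p + hat q :=
  sum_add_index _ _ _ (by simp) (by simp [add_mul])

lemma hat_sub (p q : (ZMod 2)[X]) : hat (p - q) = hat p - hat q :=
  (AddMonoidHom.mk' hat hat_add).map_sub p q

lemma hat_one : hat 1 = X := by
  simpa using hat_monomial 0 1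

lemma X_dvd_hat (p : (ZMod 2)[X]) : X ∣ hat p := by
  induction p using Polynomial.induction_on' with
  | add p q hp hq => rw [hat_add]; exact dvd_add hp hq
  | monomial n a =>
    rw [hat_monomial]
    exact dvd_mul_of_dvd_right (dvd_pow_self X (Nat.two_pow_pos n).ne') _

lemma aeval_hat_add {A : Type*} [CommSemiring A] [Algebra (ZMod 2) A] [CharP A 2]
    (p : (ZMod 2)[X]) (x y : A) :
    aeval (x + y) (hat p) = aeval x (hat p) + aeval y (hat p) := by
  induction p using Polynomial.induction_on' with
  | add p q hp hq => simp only [hat_add, map_add, hp, hq]; ring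
  | monomial n a => simp [hat_monomial, add_pow_char_pow, mul_add]

lemma hat_mul (p q : (ZMod 2)[X]) : hat (p * q) = (hat p).comp (hat q) := by
  induction p using Polynomial.induction_on' with
  | add p₁ p₂ h₁ h₂ => rw [add_mul, hat_add, h₁, h₂, hat_add, add_comp]
  | monomial n a =>
    induction q using Polynomial.induction_on' with
    | add q₁ q₂ h₁ h₂ =>
      rw [mul_add, hat_add, h₁, h₂, hat_add, comp_eq_aeval, comp_eq_aeval, comp_eq_aeval,
        aeval_hat_add]
    | monomial m b =>
      rw [monomial_mul_monomial, hat_monomial, hat_monomial, hat_monomial, mul_comp, C_comp,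
        pow_comp, X_comp, mul_pow, ← C_pow, ZMod.pow_card_pow, ← pow_mul, ← pow_add, C_mul,
        mul_assoc, add_comm m n]

lemma aeval_hat_mul {A : Type*} [Semiring A] [Algebra (ZMod 2) A] (p q : (ZMod 2)[X]) (x : A) :
    aeval x (hat (p * q)) = aeval (aeval x (hat q)) (hat p) := by
  rw [hat_mul, aeval_comp]

lemma hat_dvd_hat_mul (p q : (ZMod 2)[X]) : hat q ∣ hat (p * q) := by
  obtain ⟨r, hr⟩ := X_dvd_hat p
  rw [hat_mul, hr, mul_comp, X_comp]
  exact dvd_mul_right _ _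

lemma aeval_add_aeval_hat {A : Type*} [CommSemiring A] [Algebra (ZMod 2) A] [CharP A 2]
    (a b p : (ZMod 2)[X]) (y z : A) :
    aeval (aeval y (hat b) + aeval z (hat a)) (hat p) =
      aeval y (hat (p * b)) + aeval z (hat (p * a)) := by
  rw [aeval_hat_add, aeval_hat_mul, aeval_hat_mul]

section HatQuotient

variable (f g : (ZMod 2)[X])

noncomputable def hatPairIdeal : Ideal (MvPolynomial (Fin 2) (ZMod 2)) :=
  Ideal.span {aeval (MvPolynomial.X 0) (hat f), aeval (MvPolynomial.X 1) (hat g)}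

lemma aeval_X_zero_hat_mul_mem_hatPairIdeal (p : (ZMod 2)[X]) :
    aeval (MvPolynomial.X 0) (hat (p * f)) ∈ hatPairIdeal f g :=
  Ideal.mem_of_dvd _ (map_dvd _ (hat_dvd_hat_mul p f)) (Ideal.subset_span (by simp))

lemma aeval_X_one_hat_mul_mem_hatPairIdeal (p : (ZMod 2)[X]) :
    aeval (MvPolynomial.X 1) (hat (p * g)) ∈ hatPairIdeal f g :=
  Ideal.mem_of_dvd _ (map_dvd _ (hat_dvd_hat_mul p g)) (Ideal.subset_span (by simp))

/-- `Y ↦ ĝ(X)`, `Z ↦ f̂(X)`, where `Y = MvPolynomial.X 0` and `Z = MvPolynomial.X 1`. -/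
noncomputable def ofHatPairQuotient :
    MvPolynomial (Fin 2) (ZMod 2) ⧸ hatPairIdeal f g →ₐ[ZMod 2] AdjoinRoot ((hat f).comp (hat g)) :=
  Ideal.Quotient.liftₐ _
    (MvPolynomial.aeval ![aeval (AdjoinRoot.root _) (hat g), aeval (AdjoinRoot.root _) (hat f)])
    fun x hx => RingHom.mem_ker.1 <| Ideal.span_le.2 (by
      have hroot : aeval (AdjoinRoot.root ((hat f).comp (hat g))) (hat (f * g)) = 0 := by
        rw [hat_mul, AdjoinRoot.aeval_eq, AdjoinRoot.mk_self]
      rw [Set.insert_subset_iff, Set.singleton_subset_iff]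
      refine ⟨?_, ?_⟩ <;>
        rw [SetLike.mem_coe, RingHom.mem_ker, ← aeval_algHom_apply, MvPolynomial.aeval_X]
      · rw [Matrix.cons_val_zero, ← aeval_hat_mul, hroot]
      · rw [Matrix.cons_val_one, Matrix.cons_val_zero, ← aeval_hat_mul, mul_comm, hroot]) hx

variable (a b : (ZMod 2)[X])

/-- `X ↦ b̂(Y) + â(Z)`. -/
noncomputable def toHatPairQuotient :
    AdjoinRoot ((hat f).comp (hat g)) →ₐ[ZMod 2] MvPolynomial (Fin 2) (ZMod 2) ⧸ hatPairIdeal f g :=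
  AdjoinRoot.liftAlgHom _ (Algebra.ofId _ _)
    (Ideal.Quotient.mkₐ (ZMod 2) _
      (aeval (MvPolynomial.X 0) (hat b) + aeval (MvPolynomial.X 1) (hat a)))
    (by
      have hY : f * g * b = g * b * f := by ring
      have hZ : f * g * a = f * a * g := by ring
      rw [Algebra.toRingHom_ofId, ← aeval_def, aeval_algHom_apply, ← hat_mul, aeval_add_aeval_hat,
        Ideal.Quotient.mkₐ_eq_mk, Ideal.Quotient.eq_zero_iff_mem, hY, hZ]
      exact add_mem (aeval_X_zero_hat_mul_mem_hatPairIdeal f g _)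
        (aeval_X_one_hat_mul_mem_hatPairIdeal f g _))

lemma ofHatPairQuotient_mk (x : MvPolynomial (Fin 2) (ZMod 2)) :
    ofHatPairQuotient f g (Ideal.Quotient.mkₐ (ZMod 2) _ x) =
      MvPolynomial.aeval
        ![aeval (AdjoinRoot.root _) (hat g), aeval (AdjoinRoot.root _) (hat f)] x :=
  rfl

lemma toHatPairQuotient_aeval_root_hat (p : (ZMod 2)[X]) :
    toHatPairQuotient f g a b (aeval (AdjoinRoot.root _) (hat p)) =
      Ideal.Quotient.mkₐ (ZMod 2) _
        (aeval (MvPolynomial.X 0) (hat (p * b)) + aeval (MvPolynomial.X 1) (hat (p * a))) := by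
  rw [← aeval_algHom_apply, toHatPairQuotient, AdjoinRoot.liftAlgHom_root, aeval_algHom_apply,
    aeval_add_aeval_hat]

lemma ofHatPairQuotient_comp_toHatPairQuotient (hab : a * f + b * g = 1) :
    (ofHatPairQuotient f g).comp (toHatPairQuotient f g a b) = AlgHom.id _ _ := by
  refine AdjoinRoot.algHom_ext ?_
  rw [AlgHom.comp_apply, toHatPairQuotient, AdjoinRoot.liftAlgHom_root, ofHatPairQuotient_mk,
    map_add, ← aeval_algHom_apply, ← aeval_algHom_apply, MvPolynomial.aeval_X, MvPolynomial.aeval_X,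
    Matrix.cons_val_zero, Matrix.cons_val_one, Matrix.cons_val_zero, ← aeval_hat_mul,
    ← aeval_hat_mul, ← map_add, ← hat_add, add_comm, hab, hat_one, aeval_X, AlgHom.id_apply]

lemma toHatPairQuotient_comp_ofHatPairQuotient (hab : a * f + b * g = 1) :
    (toHatPairQuotient f g a b).comp (ofHatPairQuotient f g) = AlgHom.id _ _ := by
  have hbg : b * g = 1 - a * f := eq_sub_of_add_eq' hab
  have haf : a * f = 1 - b * g := eq_sub_of_add_eq hab
  refine Ideal.Quotient.algHom_ext _ (MvPolynomial.algHom_ext (Fin.forall_fin_two.2 ⟨?_, ?_⟩)) <;>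
    rw [AlgHom.id_comp, AlgHom.comp_apply, AlgHom.comp_apply, ofHatPairQuotient_mk,
      MvPolynomial.aeval_X]
  · rw [Matrix.cons_val_zero, toHatPairQuotient_aeval_root_hat, mul_comm g b, mul_comm g a, hbg,
      hat_sub, hat_one, map_sub, aeval_X, Ideal.Quotient.mkₐ_eq_mk, Ideal.Quotient.eq]
    convert sub_mem (aeval_X_one_hat_mul_mem_hatPairIdeal f g a)
      (aeval_X_zero_hat_mul_mem_hatPairIdeal f g a) using 1
    ring
  · rw [Matrix.cons_val_one, Matrix.cons_val_zero, toHatPairQuotient_aeval_root_hat, mul_comm f b,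
      mul_comm f a, haf, hat_sub, hat_one, map_sub, aeval_X, Ideal.Quotient.mkₐ_eq_mk,
      Ideal.Quotient.eq]
    convert sub_mem (aeval_X_zero_hat_mul_mem_hatPairIdeal f g b)
      (aeval_X_one_hat_mul_mem_hatPairIdeal f g b) using 1
    ring

noncomputable def hatCompEquiv (hab : a * f + b * g = 1) :
    AdjoinRoot ((hat f).comp (hat g)) ≃ₐ[ZMod 2] MvPolynomial (Fin 2) (ZMod 2) ⧸ hatPairIdeal f g :=
  AlgEquiv.ofAlgHom (toHatPairQuotient f g a b) (ofHatPairQuotient f g)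
    (toHatPairQuotient_comp_ofHatPairQuotient f g a b hab)
    (ofHatPairQuotient_comp_toHatPairQuotient f g a b hab)

end HatQuotient

theorem stmt_15 (f g : (ZMod 2)[X]) (hfg : IsCoprime f g) :
    Nonempty (((ZMod 2)[X] ⧸ Ideal.span {(hat f).comp (hat g)}) ≃ₐ[ZMod 2]
      (MvPolynomial (Fin 2) (ZMod 2) ⧸
        Ideal.span ({Polynomial.aeval (MvPolynomial.X 0) (hat f),
                     Polynomial.aeval (MvPolynomial.X 1) (hat g)} :
          Set (MvPolynomial (Fin 2) (ZMod 2))))) := by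
  obtain ⟨a, b, hab⟩ := hfg
  exact ⟨hatCompEquiv f g a b hab⟩
end

section
/- Let f and g be irreducible polynomials over F₂ of degrees d and e. Then F₂[X,Y]/(f(X), g(Y)) is isomorphic to a direct product of gcd(d,e) fields each of cardinality 2^{lcm(d,e)}. In particular, it is a field if and only if d and e are coprime. -/
/-!
`F₂[X,Y]/(f(X), g(Y))` is `L[Y]/(g)` with `L = F₂[X]/(f) ≅ 𝔽_{2^d}`. Since `g` is separable, the
Chinese remainder theorem splits `L[Y]/(g)` into the product of the fields `L[Y]/(p)` over the
distinct irreducible factors `p` of `g` over `L`. An irreducible polynomial over a finite field `k`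
has degree dividing `n` iff it divides `X^(|k|^n) - X`; since `p ∣ g` and `g` is irreducible,
`p ∣ X^(2^(dn)) - X` over `L` iff `g ∣ X^(2^(dn)) - X` over `F₂`, so `deg p ∣ n ↔ e ∣ d n`. Hence
`d · deg p = lcm(d, e)`, each factor is `𝔽_{2^lcm(d,e)}`, and comparing degrees there are
`d e / lcm(d, e) = gcd(d, e)` of them.
-/

open Polynomial UniqueFactorizationMonoid Module Function

theorem Polynomial.aeval_quotient_mk_eq_zero_iff {R A : Type*} [CommRing R] [CommRing A]
    [Algebra R A] (I : Ideal A) (a : A) (p : R[X]) :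
    aeval (Ideal.Quotient.mk I a) p = 0 ↔ aeval a p ∈ I := by
  rw [← Ideal.Quotient.mkₐ_eq_mk R, aeval_algHom_apply, Ideal.Quotient.mkₐ_eq_mk,
    Ideal.Quotient.eq_zero_iff_mem]

section Presentation
variable {R : Type*} [CommRing R] (f g : R[X])

local notation "𝔞" => Ideal.span ({aeval (MvPolynomial.X 0) f, aeval (MvPolynomial.X 1) g} :
  Set (MvPolynomial (Fin 2) R))

noncomputable def quotientSpanAevalToAdjoinRoot :
    (MvPolynomial (Fin 2) R ⧸ 𝔞) →ₐ[R] AdjoinRoot (g.map (algebraMap R (AdjoinRoot f))) :=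
  Ideal.Quotient.liftₐ _
    (MvPolynomial.aeval ![algebraMap (AdjoinRoot f) _ (AdjoinRoot.root f), AdjoinRoot.root _]) <| by
      intro a ha
      refine (Ideal.span_le (I := RingHom.ker (MvPolynomial.aeval _ : _ →ₐ[R] _))).mpr ?_ ha
      rintro _ (rfl | rfl) <;>
        rw [SetLike.mem_coe, RingHom.mem_ker, ← aeval_algHom_apply, MvPolynomial.aeval_X]
      · rw [Matrix.cons_val_zero, ← IsScalarTower.coe_toAlgHom' R (AdjoinRoot f),
          aeval_algHom_apply, AdjoinRoot.aeval_eq, AdjoinRoot.mk_self, map_zero]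
      · rw [Matrix.cons_val_one, Matrix.cons_val_zero, ← aeval_map_algebraMap (AdjoinRoot f),
          AdjoinRoot.aeval_eq, AdjoinRoot.mk_self]

noncomputable def adjoinRootToQuotientSpanAeval :
    AdjoinRoot (g.map (algebraMap R (AdjoinRoot f))) →ₐ[R] (MvPolynomial (Fin 2) R ⧸ 𝔞) :=
  AdjoinRoot.liftAlgHom _
    (AdjoinRoot.liftAlgHom f (Algebra.ofId R _) (Ideal.Quotient.mk _ (MvPolynomial.X 0))
      ((aeval_quotient_mk_eq_zero_iff _ _ f).mpr (Ideal.subset_span (by simp))))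
    (Ideal.Quotient.mk _ (MvPolynomial.X 1)) <| by
      rw [eval₂_map, AlgHom.comp_algebraMap]
      exact (aeval_quotient_mk_eq_zero_iff _ _ g).mpr (Ideal.subset_span (by simp))

theorem quotientSpanAevalToAdjoinRoot_mk_X (i : Fin 2) :
    quotientSpanAevalToAdjoinRoot f g (Ideal.Quotient.mk _ (MvPolynomial.X i)) =
      ![algebraMap (AdjoinRoot f) _ (AdjoinRoot.root f), AdjoinRoot.root _] i :=
  MvPolynomial.aeval_X ..

theorem adjoinRootToQuotientSpanAeval_root : adjoinRootToQuotientSpanAeval f g (AdjoinRoot.root _) =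
    Ideal.Quotient.mk _ (MvPolynomial.X 1) :=
  AdjoinRoot.liftAlgHom_root ..

theorem adjoinRootToQuotientSpanAeval_algebraMap_root :
    adjoinRootToQuotientSpanAeval f g (algebraMap (AdjoinRoot f) _ (AdjoinRoot.root f)) =
      Ideal.Quotient.mk _ (MvPolynomial.X 0) :=
  (AdjoinRoot.liftAlgHom_of ..).trans (AdjoinRoot.liftAlgHom_root ..)

noncomputable def quotientSpanAevalEquivAdjoinRoot :
    (MvPolynomial (Fin 2) R ⧸ 𝔞) ≃ₐ[R] AdjoinRoot (g.map (algebraMap R (AdjoinRoot f))) :=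
  AlgEquiv.ofAlgHom (quotientSpanAevalToAdjoinRoot f g) (adjoinRootToQuotientSpanAeval f g)
    (AdjoinRoot.algHom_ext'
      (AdjoinRoot.algHom_ext <|
        (congrArg _ (adjoinRootToQuotientSpanAeval_algebraMap_root f g)).trans
          (quotientSpanAevalToAdjoinRoot_mk_X f g 0))
      ((congrArg _ (adjoinRootToQuotientSpanAeval_root f g)).trans
        (quotientSpanAevalToAdjoinRoot_mk_X f g 1)))
    (Ideal.Quotient.algHom_ext R <| MvPolynomial.algHom_ext fun i => by
      refine (congrArg _ (quotientSpanAevalToAdjoinRoot_mk_X f g i)).trans ?_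
      fin_cases i
      · exact adjoinRootToQuotientSpanAeval_algebraMap_root f g
      · exact adjoinRootToQuotientSpanAeval_root f g)

end Presentation

theorem Nat.mul_eq_lcm_of_forall_dvd_iff {a d e : ℕ} (h : ∀ n, a ∣ n ↔ e ∣ d * n) :
    d * a = Nat.lcm d e := by
  refine Nat.dvd_antisymm ?_ (Nat.lcm_dvd (dvd_mul_right d a) ((h a).mp dvd_rfl))
  obtain ⟨b, hb⟩ := Nat.dvd_lcm_left d e
  refine hb ▸ mul_dvd_mul_left d ((h b).mpr ?_)
  exact hb ▸ Nat.dvd_lcm_right d e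

noncomputable def AdjoinRoot.equivPiOfPairwiseCoprime {R ι : Type*} [CommRing R] [Fintype ι]
    (p : ι → R[X]) (hp : Pairwise (IsCoprime on p)) :
    AdjoinRoot (∏ i, p i) ≃+* Π i, AdjoinRoot (p i) :=
  (Ideal.quotEquivOfEq (Ideal.iInf_span_singleton fun _ _ hij => hp hij).symm).trans <|
    Ideal.quotientInfRingEquivPiQuotient _ fun _ _ hij =>
      (Ideal.isCoprime_span_singleton_iff _ _).mpr (hp hij)

theorem isField_pi_fin_iff {F : Type*} [Field F] {n : ℕ} : IsField (Fin n → F) ↔ n = 1 := by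
  refine ⟨fun h => ?_, ?_⟩
  · obtain _ | _ | n := n
    · obtain ⟨x, y, hxy⟩ := h.exists_pair_ne
      exact absurd (Subsingleton.elim x y) hxy
    · rfl
    · let := h.toField
      have h01 : (Pi.single 0 1 : Fin (n + 2) → F) * Pi.single 1 1 = 0 := by
        ext i; by_cases hi : i = 0 <;> simp [Pi.single_apply, hi]
      rcases mul_eq_zero.mp h01 with h0 | h1
      · simpa using congrFun h0 0
      · simpa using congrFun h1 1
  · rintro rfl
    exact (RingEquiv.piUnique fun _ => F).toMulEquiv.isField (Field.toIsField F)

section FiniteField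

variable {K L : Type*} [Field K] [Field L] [Algebra K L]

theorem Irreducible.dvd_map_iff_dvd {g : K[X]} (hg : Irreducible g) {p : L[X]} (hp : Irreducible p)
    (hpg : p ∣ g.map (algebraMap K L)) (h : K[X]) : p ∣ h.map (algebraMap K L) ↔ g ∣ h := by
  refine ⟨fun hph => ?_, fun hgh => hpg.trans (Polynomial.map_dvd _ hgh)⟩
  by_contra hgh
  have hcop := (isCoprime_map (algebraMap K L)).mpr ((hg.coprime_iff_not_dvd).mpr hgh)
  exact hp.not_isUnit (hcop.isUnit_of_dvd' hpg hph)

variable [Finite L]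

theorem Irreducible.natDegree_dvd_iff_of_dvd_map {g : K[X]} (hg : Irreducible g) {p : L[X]}
    (hp : Irreducible p) (hpg : p ∣ g.map (algebraMap K L)) (n : ℕ) :
    p.natDegree ∣ n ↔ g.natDegree ∣ finrank K L * n := by
  have : Finite K := Finite.of_injective _ (algebraMap K L).injective
  rw [hp.natDegree_dvd_iff_dvd_X_pow_card_pow_sub_X, hg.natDegree_dvd_iff_dvd_X_pow_card_pow_sub_X,
    ← hg.dvd_map_iff_dvd hp hpg, Module.natCard_eq_pow_finrank (K := K), ← pow_mul]
  simp

theorem Irreducible.finrank_mul_natDegree_of_dvd_map {g : K[X]} (hg : Irreducible g) {p : L[X]}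
    (hp : Irreducible p) (hpg : p ∣ g.map (algebraMap K L)) :
    finrank K L * p.natDegree = Nat.lcm (finrank K L) g.natDegree :=
  Nat.mul_eq_lcm_of_forall_dvd_iff (hg.natDegree_dvd_iff_of_dvd_map hp hpg)

theorem Irreducible.card_normalizedFactors_map [DecidableEq L] {g : K[X]} (hg : Irreducible g) :
    Multiset.card (normalizedFactors (g.map (algebraMap K L))) =
      Nat.gcd (finrank K L) g.natDegree := by
  set h := g.map (algebraMap K L)
  have hdeg : ∀ p ∈ normalizedFactors h, finrank K L * p.natDegree =
      Nat.lcm (finrank K L) g.natDegree := fun p hp =>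
    hg.finrank_mul_natDegree_of_dvd_map (irreducible_of_normalized_factor p hp)
      (dvd_of_mem_normalizedFactors hp)
  have hprod : ((normalizedFactors h).map natDegree).sum = g.natDegree := by
    rw [← natDegree_multiset_prod _ (zero_notMem_normalizedFactors _),
      ← natDegree_map (algebraMap K L), natDegree_eq_of_degree_eq (degree_eq_degree_of_associated
        (prod_normalizedFactors (Polynomial.map_ne_zero hg.ne_zero)))]
  have hlcm : 0 < Nat.lcm (finrank K L) g.natDegree := Nat.lcm_pos finrank_pos hg.natDegree_pos
  refine Nat.eq_of_mul_eq_mul_right hlcm ?_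
  calc Multiset.card (normalizedFactors h) * Nat.lcm (finrank K L) g.natDegree
      = ((normalizedFactors h).map fun p => finrank K L * p.natDegree).sum := by
        rw [Multiset.map_congr rfl hdeg, Multiset.map_const', Multiset.sum_replicate, smul_eq_mul]
    _ = finrank K L * g.natDegree := by rw [Multiset.sum_map_mul_left, hprod]
    _ = _ := (Nat.gcd_mul_lcm _ _).symm

theorem Irreducible.nonempty_adjoinRoot_ringEquiv_of_dvd_map {g : K[X]} (hg : Irreducible g)
    {p : L[X]} (hp : Irreducible p) (hpg : p ∣ g.map (algebraMap K L)) {F : Type*} [Field F]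
    [Finite F] (hF : Nat.card F = Nat.card K ^ Nat.lcm (finrank K L) g.natDegree) :
    Nonempty (AdjoinRoot p ≃+* F) := by
  have := Fact.mk hp
  have := (AdjoinRoot.powerBasis hp.ne_zero).finite
  have : Finite (AdjoinRoot p) := Module.finite_of_finite L
  have hcard : Nat.card (AdjoinRoot p) = Nat.card F := by
    rw [hF, Module.natCard_eq_pow_finrank (K := K), ← Module.finrank_mul_finrank K L,
      (AdjoinRoot.powerBasis hp.ne_zero).finrank, AdjoinRoot.powerBasis_dim,
      hg.finrank_mul_natDegree_of_dvd_map hp hpg]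
  have := Fintype.ofFinite (AdjoinRoot p)
  have := Fintype.ofFinite F
  exact ⟨FiniteField.ringEquivOfCardEq (by simpa only [Nat.card_eq_fintype_card] using hcard)⟩

theorem Irreducible.nonempty_adjoinRoot_map_ringEquiv_pi {g : K[X]} (hg : Irreducible g)
    {F : Type*} [Field F] [Finite F]
    (hF : Nat.card F = Nat.card K ^ Nat.lcm (finrank K L) g.natDegree) :
    Nonempty (AdjoinRoot (g.map (algebraMap K L)) ≃+*
      (Fin (Nat.gcd (finrank K L) g.natDegree) → F)) := by
  classical
  have : Finite K := Finite.of_injective _ (algebraMap K L).injective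
  set h := g.map (algebraMap K L)
  have h0 : h ≠ 0 := Polynomial.map_ne_zero hg.ne_zero
  have hnodup : (normalizedFactors h).Nodup := (squarefree_iff_nodup_normalizedFactors h0).mp
    (PerfectField.separable_of_irreducible hg).map.squarefree
  let s := (normalizedFactors h).toFinset
  have hmem (p : s) : (p : L[X]) ∈ normalizedFactors h := Multiset.mem_toFinset.mp p.2
  have hcop : Pairwise (IsCoprime on fun p : s => (p : L[X])) := fun p q hpq =>
    (irreducible_of_normalized_factor _ (hmem p)).coprime_iff_not_dvd.mpr fun hdvd =>
      hpq <| Subtype.ext <| mem_normalizedFactors_eq_of_associated (hmem p) (hmem q) <|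
        (irreducible_of_normalized_factor _ (hmem p)).associated_of_dvd
          (irreducible_of_normalized_factor _ (hmem q)) hdvd
  have hassoc : Associated h (∏ p : s, (p : L[X])) := by
    rw [Finset.prod_coe_sort s fun p => p, Finset.prod_eq_multiset_prod, Multiset.toFinset_val,
      Multiset.dedup_eq_self.mpr hnodup, Multiset.map_id']
    exact (prod_normalizedFactors h0).symm
  have hs : Fintype.card s = Nat.gcd (finrank K L) g.natDegree := by
    rw [Fintype.card_coe, Multiset.toFinset_card_of_nodup hnodup, hg.card_normalizedFactors_map]
  have hfactor (p : s) : Nonempty (AdjoinRoot (p : L[X]) ≃+* F) :=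
    hg.nonempty_adjoinRoot_ringEquiv_of_dvd_map (irreducible_of_normalized_factor _ (hmem p))
      (dvd_of_mem_normalizedFactors (hmem p)) hF
  exact ⟨(AdjoinRoot.algEquivOfAssociated L _ _ hassoc).toRingEquiv.trans <|
    (AdjoinRoot.equivPiOfPairwiseCoprime _ hcop).trans <|
      (RingEquiv.piCongrRight fun p => (hfactor p).some).trans <|
        RingEquiv.piCongrLeft (fun _ => F) (Fintype.equivFinOfCardEq hs)⟩

end FiniteField

theorem stmt_17 (f g : (ZMod 2)[X]) (hf : Irreducible f) (hg : Irreducible g)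
    (d e : ℕ) (hd : d = f.natDegree) (he : e = g.natDegree) :
    (∃ (K : Type) (_ : Field K), Nat.card K = 2 ^ Nat.lcm d e ∧
      Nonempty ((MvPolynomial (Fin 2) (ZMod 2) ⧸
          Ideal.span ({Polynomial.aeval (MvPolynomial.X 0) f,
                       Polynomial.aeval (MvPolynomial.X 1) g} :
            Set (MvPolynomial (Fin 2) (ZMod 2)))) ≃+*
        (Fin (Nat.gcd d e) → K))) ∧
    (IsField (MvPolynomial (Fin 2) (ZMod 2) ⧸
        Ideal.span ({Polynomial.aeval (MvPolynomial.X 0) f,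
                     Polynomial.aeval (MvPolynomial.X 1) g} :
          Set (MvPolynomial (Fin 2) (ZMod 2)))) ↔
      Nat.Coprime d e) := by
  subst hd he
  have := Fact.mk hf
  have := (AdjoinRoot.powerBasis hf.ne_zero).finite
  have : Finite (AdjoinRoot f) := Module.finite_of_finite (ZMod 2)
  have hd : finrank (ZMod 2) (AdjoinRoot f) = f.natDegree := by
    rw [(AdjoinRoot.powerBasis hf.ne_zero).finrank, AdjoinRoot.powerBasis_dim]
  set N := Nat.lcm f.natDegree g.natDegree
  have hN : Nat.card (GaloisField 2 N) = 2 ^ N :=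
    GaloisField.card 2 N (Nat.lcm_ne_zero hf.natDegree_pos.ne' hg.natDegree_pos.ne')
  obtain ⟨E⟩ := hg.nonempty_adjoinRoot_map_ringEquiv_pi (L := AdjoinRoot f) (F := GaloisField 2 N)
    (by rw [hN, hd, Nat.card_zmod])
  rw [hd] at E
  let E' := (quotientSpanAevalEquivAdjoinRoot f g).toRingEquiv.trans E
  exact ⟨⟨_, inferInstance, hN, ⟨E'⟩⟩,
    E'.toMulEquiv.isField_congr.trans (isField_pi_fin_iff.trans Nat.coprime_iff_gcd_eq_one.symm)⟩
end
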